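/- If a sequence of moments m_n has classical cumulants c_n and free cumulants κ_n, then the boolean cumulants b_n satisfy b_n = Σ_{π irreducible partition of [n]} Π_{V∈π} c_{|V|} = Σ_{π irreducible noncrossing partition of [n]} Π_{V∈π} κ_{|V|}. -/

import Mathlib

/-!
Let `k` be the first position at which a partition of `[n]` can be cut, i.e. no block has
points on both sides of the gap after `k`. The part of the partition on `[k]` is irreducible,
because the crossing component of the block of `1` always ends at such a cut. So partitions of
`[n]` correspond to pairs (irreducible partition of `[k]`, partition of `[n - k]`), and this
restricts to noncrossing and to interval partitions, both properties being checked piece by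
piece. With `A` the moment sequence and `A 0 = 1`, this gives `A n = ∑_k T k * A (n - k)` where
`T k` is the irreducible classical (or free) sum, and also where `T k = b k`, the one-block
partition being the only irreducible interval partition. This recursion determines `T` from `A`.
-/

/-- `P` is a partition of `Fin n`. -/
def IsPartitionOf {n : ℕ} (P : Finset (Finset (Fin n))) : Prop :=
  (∀ B ∈ P, B.Nonempty) ∧ ∀ i : Fin n, ∃! B, B ∈ P ∧ i ∈ B

/-- A subinterval of `Fin n`. -/
def IsIntervalSet {n : ℕ} (s : Finset (Fin n)) : Prop :=
  ∃ a b : Fin n, s = Finset.Icc a b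

/-- A partition is noncrossing if no two distinct blocks cross. -/
def IsNoncrossing {n : ℕ} (P : Finset (Finset (Fin n))) : Prop :=
  ∀ B ∈ P, ∀ C ∈ P, B ≠ C →
    ¬∃ a b c d : Fin n, a < b ∧ b < c ∧ c < d ∧ a ∈ B ∧ c ∈ B ∧ b ∈ C ∧ d ∈ C

/-- An interval partition: every block is an interval. -/
def IsIntervalPartition {n : ℕ} (P : Finset (Finset (Fin n))) : Prop :=
  IsPartitionOf P ∧ ∀ B ∈ P, IsIntervalSet B

/-- Two blocks cross each other. -/
def Crosses {n : ℕ} (B C : Finset (Fin n)) : Prop :=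
  ∃ a b c d : Fin n, a < b ∧ b < c ∧ c < d ∧
    ((a ∈ B ∧ c ∈ B ∧ b ∈ C ∧ d ∈ C) ∨ (a ∈ C ∧ c ∈ C ∧ b ∈ B ∧ d ∈ B))

/-- A partition of `[n]` is irreducible if `1` and `n` lie in the same connected component
of the diagram, i.e. the block of `1` and the block of `n` are joined by a chain of
crossings. -/
def IsIrreduciblePartition {n : ℕ} (P : Finset (Finset (Fin n))) : Prop :=
  ∃ (hn : 0 < n) (B C : Finset (Fin n)), B ∈ P ∧ C ∈ P ∧
    (⟨0, hn⟩ : Fin n) ∈ B ∧ (⟨n - 1, Nat.sub_lt hn Nat.one_pos⟩ : Fin n) ∈ C ∧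
    Relation.ReflTransGen (fun X Y => X ∈ P ∧ Y ∈ P ∧ Crosses X Y) B C

section

open Finset

variable {n : ℕ} {P : Finset (Finset (Fin n))} {B C : Finset (Fin n)}

theorem IsPartitionOf.eq_of_mem (hP : IsPartitionOf P) {i : Fin n} (hB : B ∈ P) (hC : C ∈ P)
    (hiB : i ∈ B) (hiC : i ∈ C) : B = C :=
  (hP.2 i).unique ⟨hB, hiB⟩ ⟨hC, hiC⟩

theorem Crosses.symm (h : Crosses B C) : Crosses C B := by
  obtain ⟨a, b, c, d, hab, hbc, hcd, h⟩ := h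
  exact ⟨a, b, c, d, hab, hbc, hcd, h.symm⟩

theorem Crosses.exists_lt (h : Crosses B C) : ∃ y ∈ C, ∃ x ∈ B, y < x := by
  obtain ⟨a, b, c, d, hab, hbc, -, ⟨-, hc, hb, -⟩ | ⟨ha, -, hb, -⟩⟩ := h
  · exact ⟨b, hb, c, hc, hbc⟩
  · exact ⟨a, ha, b, hb, hab⟩

theorem not_crosses_of_forall_lt (h : ∀ x ∈ B, ∀ y ∈ C, x < y) : ¬Crosses B C := fun hBC =>
  let ⟨y, hy, x, hx, hyx⟩ := hBC.exists_lt
  (h x hx y hy).asymm hyx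

theorem crosses_map_iff {a b : ℕ} {B C : Finset (Fin a)} (e : Fin a ↪ Fin b) (he : StrictMono e) :
    Crosses (B.map e) (C.map e) ↔ Crosses B C := by
  constructor
  · rintro ⟨x, y, z, w, hxy, hyz, hzw, h⟩
    have hrange : ∀ i, i ∈ B.map e ∨ i ∈ C.map e → ∃ j, e j = i := by
      rintro i (hi | hi) <;> obtain ⟨j, -, rfl⟩ := mem_map.mp hi <;> exact ⟨j, rfl⟩
    obtain ⟨x, rfl⟩ := hrange x (by tauto)
    obtain ⟨y, rfl⟩ := hrange y (by tauto)
    obtain ⟨z, rfl⟩ := hrange z (by tauto)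
    obtain ⟨w, rfl⟩ := hrange w (by tauto)
    simp only [mem_map', he.lt_iff_lt] at h hxy hyz hzw
    exact ⟨x, y, z, w, hxy, hyz, hzw, h⟩
  · rintro ⟨x, y, z, w, hxy, hyz, hzw, h⟩
    exact ⟨e x, e y, e z, e w, he hxy, he hyz, he hzw, by simpa only [mem_map'] using h⟩

theorem isIntervalSet_map_iff {a b : ℕ} {B : Finset (Fin a)} (e : Fin a ↪ Fin b)
    (he : ∀ i j, (Icc i j).map e = Icc (e i) (e j)) (hB : B.Nonempty) :
    IsIntervalSet (B.map e) ↔ IsIntervalSet B := by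
  constructor
  · rintro ⟨x, y, hxy⟩
    obtain ⟨b, hb⟩ := hB
    have hle : x ≤ y := nonempty_Icc.mp ⟨e b, hxy ▸ mem_map_of_mem e hb⟩
    obtain ⟨i, -, rfl⟩ := mem_map.mp (hxy ▸ left_mem_Icc.mpr hle)
    obtain ⟨j, -, rfl⟩ := mem_map.mp (hxy ▸ right_mem_Icc.mpr hle)
    exact ⟨i, j, map_inj.mp (hxy.trans (he i j).symm)⟩
  · rintro ⟨i, j, rfl⟩
    exact ⟨e i, e j, he i j⟩

theorem isNoncrossing_iff_forall_not_crosses :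
    IsNoncrossing P ↔ ∀ B ∈ P, ∀ C ∈ P, B ≠ C → ¬Crosses B C := by
  constructor
  · rintro h B hB C hC hBC ⟨a, b, c, d, hab, hbc, hcd, h' | h'⟩
    · exact h B hB C hC hBC ⟨a, b, c, d, hab, hbc, hcd, h'⟩
    · exact h C hC B hB hBC.symm ⟨a, b, c, d, hab, hbc, hcd, h'⟩
  · rintro h B hB C hC hBC ⟨a, b, c, d, hab, hbc, hcd, h'⟩
    exact h B hB C hC hBC ⟨a, b, c, d, hab, hbc, hcd, .inl h'⟩

theorem Function.Injective.existsUnique_exists_and_eq_iff {α β : Type*} {f : α → β}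
    (hf : Function.Injective f) {p : α → Prop} : (∃! y, ∃ x, p x ∧ f x = y) ↔ ∃! x, p x := by
  constructor
  · rintro ⟨_, ⟨x, hx, rfl⟩, huniq⟩
    exact ⟨x, hx, fun x' hx' => hf (huniq _ ⟨x', hx', rfl⟩)⟩
  · rintro ⟨x, hx, huniq⟩
    exact ⟨f x, ⟨x, hx, rfl⟩, by rintro _ ⟨x', hx', rfl⟩; rw [huniq x' hx']⟩

end

namespace IrreducibleDecomposition

open Finset Relation

section Cuts

variable {n : ℕ} {P : Finset (Finset (Fin n))} {X Y : Finset (Fin n)}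

def SplitsAt (P : Finset (Finset (Fin n))) (j : ℕ) : Prop :=
  ∀ B ∈ P, ∀ x ∈ B, ∀ y ∈ B, (x : ℕ) < j → (y : ℕ) < j

theorem splitsAt_of_le {j : ℕ} (h : n ≤ j) : SplitsAt P j :=
  fun _ _ _ _ y _ _ => y.isLt.trans_le h

def CrossingIn (P : Finset (Finset (Fin n))) (X Y : Finset (Fin n)) : Prop :=
  X ∈ P ∧ Y ∈ P ∧ Crosses X Y

theorem mem_of_reflTransGen (h : ReflTransGen (CrossingIn P) X Y) (hX : X ∈ P) : Y ∈ P := by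
  induction h with
  | refl => exact hX
  | tail _ hYZ _ => exact hYZ.2.1

theorem SplitsAt.forall_lt_of_reflTransGen {j : ℕ} (hj : SplitsAt P j)
    (h : ReflTransGen (CrossingIn P) X Y) (hX : X ∈ P) {x : Fin n} (hx : x ∈ X)
    (hxj : (x : ℕ) < j) : ∀ y ∈ Y, (y : ℕ) < j := by
  induction h with
  | refl => exact fun y hy => hj X hX x hx y hy hxj
  | tail _ hYZ ih =>
    obtain ⟨z, hz, y, hy, hzy⟩ := hYZ.2.2.exists_lt
    exact fun w hw => hj _ hYZ.2.1 z hz w hw ((Fin.lt_def.mp hzy).trans (ih y hy))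

theorem exists_straddle_of_reflTransGen (h : ReflTransGen (CrossingIn P) X Y) {t : Fin n}
    (hX : ∃ x ∈ X, x ≤ t) (hY : ∃ y ∈ Y, t < y) :
    ∃ Z, ReflTransGen (CrossingIn P) X Z ∧ (∃ z ∈ Z, z ≤ t) ∧ ∃ z ∈ Z, t < z := by
  induction h using ReflTransGen.head_induction_on with
  | refl => exact ⟨Y, .refl, hX, hY⟩
  | @head X X' hXX' _ ih =>
    by_cases hXt : ∃ x ∈ X, t < x
    · exact ⟨X, .refl, hX, hXt⟩
    push Not at hXt
    obtain ⟨x', hx', x, hx, hx'x⟩ := hXX'.2.2.exists_lt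
    obtain ⟨Z, hZ, hZt⟩ := ih ⟨x', hx', (hx'x.trans_le (hXt x hx)).le⟩
    exact ⟨Z, .head hXX' hZ, hZt⟩

/-- A block straddling the gap after `L` would cross some block reachable from `B₀`. -/
theorem splitsAt_succ_of_forall_le (hP : IsPartitionOf P) (hn : 0 < n) {B₀ Y : Finset (Fin n)}
    (hB₀ : B₀ ∈ P) (h0 : (⟨0, hn⟩ : Fin n) ∈ B₀) (hY : ReflTransGen (CrossingIn P) B₀ Y)
    {L : Fin n} (hL : L ∈ Y) (hmax : ∀ Z, ReflTransGen (CrossingIn P) B₀ Z → ∀ i ∈ Z, i ≤ L) :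
    SplitsAt P (L + 1) := by
  intro D hD p hp q hq hpL
  by_contra hqL
  have hLq : L < q := by rw [Fin.lt_def]; omega
  have hD_far : ¬ReflTransGen (CrossingIn P) B₀ D := fun h => (hmax D h q hq).not_gt hLq
  have hp_far : ∀ Z, ReflTransGen (CrossingIn P) B₀ Z → p ∉ Z := fun Z hZ hpZ =>
    hD_far (hP.eq_of_mem (mem_of_reflTransGen hZ hB₀) hD hpZ hp ▸ hZ)
  have hpL' : p < L := lt_of_le_of_ne (by rw [Fin.le_def]; omega)
    fun h => hp_far Y hY (h ▸ hL)
  obtain ⟨Z, hZ, ⟨z, hz, hzp⟩, ⟨z', hz', hpz'⟩⟩ :=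
    exists_straddle_of_reflTransGen hY ⟨_, h0, Fin.mk_le_of_le_val (Nat.zero_le _)⟩ ⟨L, hL, hpL'⟩
  have hzp' : z < p := lt_of_le_of_ne hzp fun h => hp_far Z hZ (h ▸ hz)
  exact hD_far <| hZ.tail ⟨mem_of_reflTransGen hZ hB₀, hD,
    z, p, z', q, hzp', hpz', (hmax Z hZ z' hz').trans_lt hLq, .inl ⟨hz, hz', hp, hq⟩⟩

theorem isIrreduciblePartition_iff (hP : IsPartitionOf P) :
    IsIrreduciblePartition P ↔ 0 < n ∧ ∀ j, 0 < j → j < n → ¬SplitsAt P j := by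
  constructor
  · rintro ⟨hn, B, C, hB, hC, h0, hlast, hBC⟩
    refine ⟨hn, fun j hj hjn hsplit => ?_⟩
    have := hsplit.forall_lt_of_reflTransGen hBC hB h0 hj _ hlast
    simp only at this
    omega
  · classical
    rintro ⟨hn, hcut⟩
    obtain ⟨B₀, ⟨hB₀, h0⟩, -⟩ := hP.2 ⟨0, hn⟩
    set reach := univ.filter fun i => ∃ Y, ReflTransGen (CrossingIn P) B₀ Y ∧ i ∈ Y
    have hreach : reach.Nonempty := ⟨_, mem_filter.mpr ⟨mem_univ _, B₀, .refl, h0⟩⟩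
    obtain ⟨Y, hY, hL⟩ := (mem_filter.mp (reach.max'_mem hreach)).2
    have hsplit := splitsAt_succ_of_forall_le hP hn hB₀ h0 hY hL
      fun Z hZ i hi => reach.le_max' i (mem_filter.mpr ⟨mem_univ _, Z, hZ, hi⟩)
    have hlast : reach.max' hreach = ⟨n - 1, by omega⟩ := by
      have := (reach.max' hreach).isLt
      have := mt (hcut _ (Nat.succ_pos _)) (not_not.mpr hsplit)
      ext; simp only; omega
    exact ⟨hn, B₀, Y, hB₀, mem_of_reflTransGen hY hB₀, h0, hlast ▸ hL, hY⟩

end Cuts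

section Concat

variable {k l : ℕ} {R R' : Finset (Finset (Fin k))} {S S' : Finset (Finset (Fin l))}

def concat (R : Finset (Finset (Fin k))) (S : Finset (Finset (Fin l))) :
    Finset (Finset (Fin (k + l))) :=
  R.map (mapEmbedding (Fin.castAddEmb l)).toEmbedding ∪
    S.map (mapEmbedding (Fin.natAddEmb k)).toEmbedding

theorem mem_concat {X : Finset (Fin (k + l))} :
    X ∈ concat R S ↔
      (∃ B ∈ R, B.map (Fin.castAddEmb l) = X) ∨ ∃ B ∈ S, B.map (Fin.natAddEmb k) = X := by
  simp [concat]

theorem val_lt_of_mem_map_castAddEmb {B : Finset (Fin k)} {x : Fin (k + l)}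
    (hx : x ∈ B.map (Fin.castAddEmb l)) : (x : ℕ) < k := by
  obtain ⟨i, -, rfl⟩ := mem_map.mp hx
  simp

theorem le_val_of_mem_map_natAddEmb {B : Finset (Fin l)} {y : Fin (k + l)}
    (hy : y ∈ B.map (Fin.natAddEmb k)) : k ≤ (y : ℕ) := by
  obtain ⟨j, -, rfl⟩ := mem_map.mp hy
  simp

theorem map_castAddEmb_ne_map_natAddEmb {B : Finset (Fin k)} {B' : Finset (Fin l)}
    (hB' : B'.Nonempty) : B.map (Fin.castAddEmb l) ≠ B'.map (Fin.natAddEmb k) := by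
  intro h
  obtain ⟨y, hy⟩ := hB'.map (f := Fin.natAddEmb k)
  have := val_lt_of_mem_map_castAddEmb (h ▸ hy)
  have := le_val_of_mem_map_natAddEmb hy
  omega

theorem map_castAddEmb_mem_concat (hS : ∀ B ∈ S, B.Nonempty) {B : Finset (Fin k)} :
    B.map (Fin.castAddEmb l) ∈ concat R S ↔ B ∈ R := by
  simp only [mem_concat, map_inj, exists_eq_right, or_iff_left_iff_imp]
  rintro ⟨B', hB', h⟩
  exact absurd h.symm (map_castAddEmb_ne_map_natAddEmb (hS B' hB'))

theorem map_natAddEmb_mem_concat (hR : ∀ B ∈ R, B.Nonempty) {B : Finset (Fin l)} :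
    B.map (Fin.natAddEmb k) ∈ concat R S ↔ B ∈ S := by
  simp only [mem_concat, map_inj, exists_eq_right, or_iff_right_iff_imp]
  rintro ⟨B', hB', h⟩
  exact (map_castAddEmb_ne_map_natAddEmb (map_nonempty.mp (h ▸ (hR B' hB').map)) h).elim

theorem concat_inj (hR : ∀ B ∈ R, B.Nonempty) (hS : ∀ B ∈ S, B.Nonempty)
    (hR' : ∀ B ∈ R', B.Nonempty) (hS' : ∀ B ∈ S', B.Nonempty) :
    concat R S = concat R' S' ↔ R = R' ∧ S = S' := by
  refine ⟨fun h => ⟨?_, ?_⟩, fun ⟨hRR', hSS'⟩ => hRR' ▸ hSS' ▸ rfl⟩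
  · ext B
    rw [← map_castAddEmb_mem_concat hS, h, map_castAddEmb_mem_concat hS']
  · ext B
    rw [← map_natAddEmb_mem_concat hR, h, map_natAddEmb_mem_concat hR']

theorem prod_concat {M : Type*} [CommMonoid M] (hS : ∀ B ∈ S, B.Nonempty) (g : ℕ → M) :
    ∏ X ∈ concat R S, g #X = (∏ B ∈ R, g #B) * ∏ B ∈ S, g #B := by
  have hdisj : Disjoint (R.map (mapEmbedding (Fin.castAddEmb l)).toEmbedding)
      (S.map (mapEmbedding (Fin.natAddEmb k)).toEmbedding) := by
    simp only [disjoint_left, mem_map, mapEmbedding_apply, RelEmbedding.coe_toEmbedding]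
    rintro _ ⟨B, -, rfl⟩ ⟨B', hB', h⟩
    exact map_castAddEmb_ne_map_natAddEmb (hS B' hB') h.symm
  simp [concat, prod_union hdisj]

theorem isPartitionOf_concat_iff :
    IsPartitionOf (concat R S) ↔ IsPartitionOf R ∧ IsPartitionOf S := by
  have hnonempty : (∀ X ∈ concat R S, X.Nonempty) ↔
      (∀ B ∈ R, B.Nonempty) ∧ ∀ B ∈ S, B.Nonempty := by
    simp [mem_concat, or_imp, forall_and]
  have hleft (i : Fin k) : (∃! X, X ∈ concat R S ∧ Fin.castAdd l i ∈ X) ↔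
      ∃! B, B ∈ R ∧ i ∈ B := by
    refine .trans (existsUnique_congr fun X => ⟨?_, ?_⟩)
      (map_injective (Fin.castAddEmb l)).existsUnique_exists_and_eq_iff
    · rintro ⟨hX, hiX⟩
      rcases mem_concat.mp hX with ⟨B, hB, rfl⟩ | ⟨B, -, rfl⟩
      · exact ⟨B, ⟨hB, by simpa using hiX⟩, rfl⟩
      · exact absurd (le_val_of_mem_map_natAddEmb hiX) (by simp)
    · rintro ⟨B, ⟨hB, hiB⟩, rfl⟩
      exact ⟨mem_concat.mpr (.inl ⟨B, hB, rfl⟩), by simpa using hiB⟩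
  have hright (j : Fin l) : (∃! X, X ∈ concat R S ∧ Fin.natAdd k j ∈ X) ↔
      ∃! B, B ∈ S ∧ j ∈ B := by
    refine .trans (existsUnique_congr fun X => ⟨?_, ?_⟩)
      (map_injective (Fin.natAddEmb k)).existsUnique_exists_and_eq_iff
    · rintro ⟨hX, hjX⟩
      rcases mem_concat.mp hX with ⟨B, -, rfl⟩ | ⟨B, hB, rfl⟩
      · exact absurd (val_lt_of_mem_map_castAddEmb hjX) (by simp)
      · exact ⟨B, ⟨hB, by simpa using hjX⟩, rfl⟩
    · rintro ⟨B, ⟨hB, hjB⟩, rfl⟩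
      exact ⟨mem_concat.mpr (.inr ⟨B, hB, rfl⟩), by simpa using hjB⟩
  rw [IsPartitionOf, IsPartitionOf, IsPartitionOf, hnonempty, Fin.forall_fin_add,
    forall_congr' hleft, forall_congr' hright]
  tauto

theorem splitsAt_concat_iff {j : ℕ} (hj : j ≤ k) : SplitsAt (concat R S) j ↔ SplitsAt R j := by
  constructor
  · intro h B hB x hx y hy hxj
    simpa using h _ (mem_concat.mpr (.inl ⟨B, hB, rfl⟩)) _ (mem_map_of_mem _ hx) _
      (mem_map_of_mem _ hy) (by simpa using hxj)
  · intro h X hX x hx y hy hxj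
    rcases mem_concat.mp hX with ⟨B, hB, rfl⟩ | ⟨B, -, rfl⟩
    · obtain ⟨x', hx', rfl⟩ := mem_map.mp hx
      obtain ⟨y', hy', rfl⟩ := mem_map.mp hy
      simpa using h B hB x' hx' y' hy' (by simpa using hxj)
    · have := le_val_of_mem_map_natAddEmb hx
      omega

theorem exists_concat_eq {P : Finset (Finset (Fin (k + l)))} (hP : SplitsAt P k) :
    ∃ (R : Finset (Finset (Fin k))) (S : Finset (Finset (Fin l))), concat R S = P := by
  classical
  refine ⟨univ.filter fun B => B.map (Fin.castAddEmb l) ∈ P,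
    univ.filter fun B => B.map (Fin.natAddEmb k) ∈ P, ?_⟩
  ext X
  simp only [mem_concat, mem_filter, mem_univ, true_and]
  refine ⟨by rintro (⟨B, hB, rfl⟩ | ⟨B, hB, rfl⟩) <;> exact hB, fun hX => ?_⟩
  by_cases hlow : ∃ x ∈ X, (x : ℕ) < k
  · obtain ⟨x, hx, hxk⟩ := hlow
    have hsub : X ⊆ univ.map (Fin.castAddEmb l) := fun y hy =>
      mem_map.mpr ⟨⟨y, hP X hX x hx y hy hxk⟩, mem_univ _, rfl⟩
    obtain ⟨B, -, rfl⟩ := subset_map_iff.mp hsub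
    exact .inl ⟨B, hX, rfl⟩
  · push Not at hlow
    have hsub : X ⊆ univ.map (Fin.natAddEmb k) := fun y hy => by
      have := hlow y hy
      exact mem_map.mpr ⟨⟨y - k, by omega⟩, mem_univ _, Fin.ext (by simp; omega)⟩
    obtain ⟨B, -, rfl⟩ := subset_map_iff.mp hsub
    exact .inr ⟨B, hX, rfl⟩

theorem isNoncrossing_concat_iff :
    IsNoncrossing (concat R S) ↔ IsNoncrossing R ∧ IsNoncrossing S := by
  have hsep {B : Finset (Fin k)} {C : Finset (Fin l)} :
      ∀ x ∈ B.map (Fin.castAddEmb l), ∀ y ∈ C.map (Fin.natAddEmb k), x < y := fun x hx y hy => by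
    have := val_lt_of_mem_map_castAddEmb hx
    have := le_val_of_mem_map_natAddEmb hy
    rw [Fin.lt_def]
    omega
  have hleft (B C : Finset (Fin k)) :=
    crosses_map_iff (B := B) (C := C) (Fin.castAddEmb l) (Fin.strictMono_castAdd l)
  have hright (B C : Finset (Fin l)) :=
    crosses_map_iff (B := B) (C := C) (Fin.natAddEmb k) (Fin.strictMono_natAdd k)
  simp only [isNoncrossing_iff_forall_not_crosses]
  constructor
  · intro h
    refine ⟨fun B hB C hC hBC => ?_, fun B hB C hC hBC => ?_⟩
    · rw [← hleft]
      exact h _ (mem_concat.mpr (.inl ⟨B, hB, rfl⟩)) _ (mem_concat.mpr (.inl ⟨C, hC, rfl⟩))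
        (map_inj.not.mpr hBC)
    · rw [← hright]
      exact h _ (mem_concat.mpr (.inr ⟨B, hB, rfl⟩)) _ (mem_concat.mpr (.inr ⟨C, hC, rfl⟩))
        (map_inj.not.mpr hBC)
  · rintro ⟨hR, hS⟩ X hX Y hY hXY
    rcases mem_concat.mp hX with ⟨B, hB, rfl⟩ | ⟨B, hB, rfl⟩ <;>
      rcases mem_concat.mp hY with ⟨C, hC, rfl⟩ | ⟨C, hC, rfl⟩
    · rw [hleft]
      exact hR B hB C hC (ne_of_apply_ne _ hXY)
    · exact not_crosses_of_forall_lt hsep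
    · exact fun h => not_crosses_of_forall_lt hsep h.symm
    · rw [hright]
      exact hS B hB C hC (ne_of_apply_ne _ hXY)

theorem forall_isIntervalSet_concat_iff (hR : ∀ B ∈ R, B.Nonempty) (hS : ∀ B ∈ S, B.Nonempty) :
    (∀ X ∈ concat R S, IsIntervalSet X) ↔
      (∀ B ∈ R, IsIntervalSet B) ∧ ∀ B ∈ S, IsIntervalSet B := by
  simp only [mem_concat, or_imp, forall_and, forall_exists_index, and_imp,
    forall_apply_eq_imp_iff₂]
  exact and_congr
    (forall₂_congr fun B hB => isIntervalSet_map_iff _ (by simp) (hR B hB))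
    (forall₂_congr fun B hB => isIntervalSet_map_iff _ (by simp) (hS B hB))

end Concat

section FirstCut

variable {n : ℕ} {P : Finset (Finset (Fin n))}

open Classical in
/-- The right end of the first irreducible component of `P`. -/
noncomputable def firstCut (P : Finset (Finset (Fin n))) : ℕ :=
  Nat.find (⟨n + 1, n.succ_pos, splitsAt_of_le n.le_succ⟩ : ∃ j, 0 < j ∧ SplitsAt P j)

theorem firstCut_eq_iff {k : ℕ} :
    firstCut P = k ↔ 0 < k ∧ SplitsAt P k ∧ ∀ j, 0 < j → j < k → ¬SplitsAt P j := by
  classical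
  rw [firstCut, Nat.find_eq_iff, and_assoc]
  exact and_congr_right' (and_congr_right' ⟨fun h j hj hjk hs => h j hjk ⟨hj, hs⟩,
    fun h j hjk hs => h j hs.1 hjk hs.2⟩)

theorem firstCut_mem_Icc (hn : 0 < n) : firstCut P ∈ Icc 1 n := by
  obtain ⟨hpos, -, hmin⟩ := firstCut_eq_iff.mp (rfl : firstCut P = _)
  exact mem_Icc.mpr ⟨hpos, not_lt.mp fun h => hmin n hn h (splitsAt_of_le le_rfl)⟩

theorem firstCut_concat_eq_iff {k l : ℕ} {R : Finset (Finset (Fin k))}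
    {S : Finset (Finset (Fin l))} (hR : IsPartitionOf R) :
    firstCut (concat R S) = k ↔ IsIrreduciblePartition R := by
  rw [firstCut_eq_iff, isIrreduciblePartition_iff hR,
    splitsAt_concat_iff le_rfl, iff_true_intro (splitsAt_of_le le_rfl), true_and]
  exact and_congr_right' (forall_congr' fun j => imp_congr_right fun _ =>
    imp_congr_right fun hjk => not_congr (splitsAt_concat_iff hjk.le))

end FirstCut

section PartitionSum

variable {M : Type*} [CommSemiring M] (Q : ∀ n, Finset (Finset (Fin n)) → Prop) (f : ℕ → M)

noncomputable def partitionSum (n : ℕ) : M :=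
  ∑ᶠ π ∈ {P : Finset (Finset (Fin n)) | IsPartitionOf P ∧ Q n P}, ∏ B ∈ π, f #B

def RespectsConcat : Prop :=
  ∀ {k l : ℕ} (R : Finset (Finset (Fin k))) (S : Finset (Finset (Fin l))),
    IsPartitionOf R → IsPartitionOf S → (Q (k + l) (concat R S) ↔ Q k R ∧ Q l S)

open Classical in
theorem partitionSum_eq_sum (n : ℕ) :
    partitionSum Q f n = ∑ P ∈ univ.filter (fun P => IsPartitionOf P ∧ Q n P), ∏ B ∈ P, f #B := by
  rw [partitionSum, finsum_mem_eq_toFinset_sum, Set.toFinset_ofPred]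

theorem partitionSum_zero (hQ : Q 0 ∅) : partitionSum Q f 0 = 1 := by
  have hpart : {P : Finset (Finset (Fin 0)) | IsPartitionOf P ∧ Q 0 P} = {∅} := by
    ext P
    simp only [Set.mem_ofPred_eq, Set.mem_singleton_iff]
    constructor
    · rintro ⟨hP, -⟩
      exact eq_empty_of_forall_notMem fun B hB => (hP.1 B hB).elim fun i _ => i.elim0
    · rintro rfl
      exact ⟨⟨by simp, fun i => i.elim0⟩, hQ⟩
  rw [partitionSum, hpart, finsum_mem_singleton, prod_empty]

variable {Q}

open Classical in
theorem sum_firstCut_eq_mul (hQ : RespectsConcat Q) {k l n : ℕ} (hn : k + l = n) :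
    ∑ P ∈ univ.filter (fun P => (IsPartitionOf P ∧ Q n P) ∧ firstCut P = k), ∏ B ∈ P, f #B =
      partitionSum (fun n P => Q n P ∧ IsIrreduciblePartition P) f k * partitionSum Q f l := by
  subst hn
  rw [partitionSum_eq_sum, partitionSum_eq_sum, sum_mul_sum, ← sum_product']
  symm
  refine sum_nbij (fun RS => concat RS.1 RS.2) ?_ ?_ ?_ ?_
  · rintro ⟨R, S⟩ hRS
    simp only [mem_product, mem_filter, mem_univ, true_and] at hRS ⊢
    obtain ⟨⟨hR, hQR, hirr⟩, hS, hQS⟩ := hRS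
    exact ⟨⟨isPartitionOf_concat_iff.mpr ⟨hR, hS⟩, (hQ R S hR hS).mpr ⟨hQR, hQS⟩⟩,
      (firstCut_concat_eq_iff hR).mpr hirr⟩
  · rintro ⟨R, S⟩ hRS ⟨R', S'⟩ hRS' h
    simp only [coe_product, Set.mem_prod, coe_filter, mem_univ, true_and,
      Set.mem_ofPred_eq] at hRS hRS'
    exact Prod.ext_iff.mpr
      ((concat_inj hRS.1.1.1 hRS.2.1.1 hRS'.1.1.1 hRS'.2.1.1).mp h)
  · intro P hP
    simp only [coe_filter, mem_univ, true_and, Set.mem_ofPred_eq] at hP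
    obtain ⟨⟨hPpart, hQP⟩, hcut⟩ := hP
    obtain ⟨R, S, rfl⟩ := exists_concat_eq (firstCut_eq_iff.mp hcut).2.1
    obtain ⟨hR, hS⟩ := isPartitionOf_concat_iff.mp hPpart
    obtain ⟨hQR, hQS⟩ := (hQ R S hR hS).mp hQP
    refine ⟨(R, S), ?_, rfl⟩
    simp only [coe_product, Set.mem_prod, coe_filter, mem_univ, true_and, Set.mem_ofPred_eq]
    exact ⟨⟨hR, hQR, (firstCut_concat_eq_iff hR).mp hcut⟩, hS, hQS⟩
  · rintro ⟨R, S⟩ hRS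
    simp only [mem_product, mem_filter] at hRS
    exact (prod_concat hRS.2.2.1.1 f).symm

theorem partitionSum_eq_sum_Icc (hQ : RespectsConcat Q) (n : ℕ) (hn : 0 < n) :
    partitionSum Q f n = ∑ k ∈ Icc 1 n,
      partitionSum (fun n P => Q n P ∧ IsIrreduciblePartition P) f k *
        partitionSum Q f (n - k) := by
  classical
  rw [partitionSum_eq_sum, ← sum_fiberwise_of_maps_to fun P _ => firstCut_mem_Icc hn]
  refine sum_congr rfl fun k hk => ?_
  rw [filter_filter]
  exact sum_firstCut_eq_mul f hQ (by grind)

theorem eq_singleton_univ_of_isIrreduciblePartition {n : ℕ} {P : Finset (Finset (Fin n))}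
    (hP : IsPartitionOf P) (hint : ∀ B ∈ P, IsIntervalSet B) (hirr : IsIrreduciblePartition P) :
    P = {univ} := by
  obtain ⟨hn, hcut⟩ := (isIrreduciblePartition_iff hP).mp hirr
  obtain ⟨B₀, ⟨hB₀, h0⟩, -⟩ := hP.2 ⟨0, hn⟩
  obtain ⟨a, b, rfl⟩ := hint B₀ hB₀
  have ha : (a : ℕ) = 0 := Nat.le_zero.mp (mem_Icc.mp h0).1
  have hsplit : SplitsAt P (b + 1) := by
    intro X hX x hx y hy hxb
    have hxB : x ∈ Icc a b := mem_Icc.mpr ⟨by rw [Fin.le_def]; omega, by rw [Fin.le_def]; omega⟩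
    rw [hP.eq_of_mem hX hB₀ hx hxB, mem_Icc, Fin.le_def] at hy
    omega
  have hb : n ≤ b + 1 := not_lt.mp fun h => hcut _ (Nat.succ_pos _) h hsplit
  have huniv : Icc a b = univ := eq_univ_of_forall fun x =>
    mem_Icc.mpr ⟨by rw [Fin.le_def]; omega, by rw [Fin.le_def]; omega⟩
  rw [huniv] at hB₀
  ext X
  refine ⟨fun hX => mem_singleton.mpr ?_, fun hX => mem_singleton.mp hX ▸ hB₀⟩
  obtain ⟨x, hx⟩ := hP.1 X hX
  exact hP.eq_of_mem hX hB₀ hx (mem_univ x)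

theorem isPartitionOf_singleton_univ {n : ℕ} (hn : 0 < n) :
    IsPartitionOf ({univ} : Finset (Finset (Fin n))) :=
  ⟨by simpa using ⟨⟨0, hn⟩, mem_univ _⟩, fun i => ⟨univ, by simp, by simp⟩⟩

theorem partitionSum_interval_irreducible {n : ℕ} (hn : 0 < n) :
    partitionSum (fun _ P => (∀ B ∈ P, IsIntervalSet B) ∧ IsIrreduciblePartition P) f n = f n := by
  have hone : {P : Finset (Finset (Fin n)) |
      IsPartitionOf P ∧ (∀ B ∈ P, IsIntervalSet B) ∧ IsIrreduciblePartition P} = {{univ}} := by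
    ext P
    simp only [Set.mem_ofPred_eq, Set.mem_singleton_iff]
    refine ⟨fun ⟨hP, hint, hirr⟩ => eq_singleton_univ_of_isIrreduciblePartition hP hint hirr, ?_⟩
    rintro rfl
    refine ⟨isPartitionOf_singleton_univ hn, ?_, hn, univ, univ, by simp, by simp, by simp,
      by simp, .refl⟩
    simp only [mem_singleton, forall_eq]
    exact ⟨⟨0, hn⟩, ⟨n - 1, by omega⟩, by ext i; simp [Fin.le_def]; omega⟩
  rw [partitionSum, hone, finsum_mem_singleton, prod_singleton, card_univ, Fintype.card_fin]

end PartitionSum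

/-- In generating functions: `∑ A_n z^n = 1 / (1 - ∑ g_k z^k)` determines `g`. -/
theorem eq_of_sum_Icc_mul_eq {M : Type*} [CommRing M] {A g h : ℕ → M} (hA : A 0 = 1)
    (hg : ∀ n, 0 < n → A n = ∑ k ∈ Icc 1 n, g k * A (n - k))
    (hh : ∀ n, 0 < n → A n = ∑ k ∈ Icc 1 n, h k * A (n - k)) {n : ℕ} (hn : 0 < n) :
    g n = h n := by
  induction n using Nat.strong_induction_on with
  | _ n ih =>
  obtain ⟨m, rfl⟩ : ∃ m, n = m + 1 := ⟨n - 1, by omega⟩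
  have hlower : ∑ k ∈ Icc 1 m, g k * A (m + 1 - k) = ∑ k ∈ Icc 1 m, h k * A (m + 1 - k) :=
    sum_congr rfl fun k hk => by rw [ih k (by grind) (by grind)]
  have := (hg _ hn).symm.trans (hh _ hn)
  rw [sum_Icc_succ_top (by omega), sum_Icc_succ_top (by omega), hlower, Nat.sub_self, hA,
    mul_one, mul_one] at this
  exact add_left_cancel this

end IrreducibleDecomposition

open IrreducibleDecomposition Finset in
/-- If the moments `m_n` have classical cumulants `c_n`, free cumulants `κ_n` and boolean
cumulants `b_n`, then `b_n = Σ_{π irreducible partition} Π c_{|V|}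
= Σ_{π irreducible noncrossing partition} Π κ_{|V|}`. -/
theorem boolean_cumulants_eq_sum_irreducible (m c κ b : ℕ → ℝ)
    (hc : ∀ n : ℕ, 1 ≤ n →
      m n = ∑ᶠ π ∈ {P : Finset (Finset (Fin n)) | IsPartitionOf P},
        ∏ B ∈ π, c B.card)
    (hκ : ∀ n : ℕ, 1 ≤ n →
      m n = ∑ᶠ π ∈ {P : Finset (Finset (Fin n)) | IsPartitionOf P ∧ IsNoncrossing P},
        ∏ B ∈ π, κ B.card)
    (hb : ∀ n : ℕ, 1 ≤ n →
      m n = ∑ᶠ π ∈ {P : Finset (Finset (Fin n)) | IsIntervalPartition P},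
        ∏ B ∈ π, b B.card) :
    ∀ n : ℕ, 1 ≤ n →
      b n = (∑ᶠ π ∈ {P : Finset (Finset (Fin n)) | IsPartitionOf P ∧ IsIrreduciblePartition P},
          ∏ B ∈ π, c B.card) ∧
      b n = (∑ᶠ π ∈ {P : Finset (Finset (Fin n)) |
            IsPartitionOf P ∧ IsNoncrossing P ∧ IsIrreduciblePartition P},
          ∏ B ∈ π, κ B.card) := by
  set A := partitionSum (fun _ _ => True) c
  have hA₀ : A 0 = 1 := partitionSum_zero _ c trivial
  have eq_A (Q : ∀ n, Finset (Finset (Fin n)) → Prop) (f : ℕ → ℝ) (hQ : Q 0 ∅)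
      (hf : ∀ n, 1 ≤ n → m n = partitionSum Q f n) : partitionSum Q f = A := by
    ext n
    rcases Nat.eq_zero_or_pos n with rfl | hn
    · rw [partitionSum_zero Q f hQ, hA₀]
    · rw [← hf n hn, hc n hn]
      simp [A, partitionSum]
  have hrec_c := partitionSum_eq_sum_Icc c (Q := fun _ _ => True) (fun _ _ _ _ => by simp)
  have hrec_κ := partitionSum_eq_sum_Icc κ (Q := fun _ P => IsNoncrossing P)
    (fun _ _ _ _ => isNoncrossing_concat_iff)
  have hrec_b := partitionSum_eq_sum_Icc b (Q := fun _ P => ∀ B ∈ P, IsIntervalSet B)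
    (fun _ _ hR hS => forall_isIntervalSet_concat_iff hR.1 hS.1)
  rw [eq_A _ κ (fun _ => by simp) hκ] at hrec_κ
  rw [eq_A _ b (fun _ => by simp) hb] at hrec_b
  have hrec_b' (n : ℕ) (hn : 0 < n) : A n = ∑ k ∈ Icc 1 n, b k * A (n - k) :=
    (hrec_b n hn).trans <| sum_congr rfl fun k hk => by
      rw [partitionSum_interval_irreducible b (mem_Icc.mp hk).1]
  intro n hn
  exact ⟨by simpa [partitionSum] using eq_of_sum_Icc_mul_eq hA₀ hrec_b' hrec_c hn,
    eq_of_sum_Icc_mul_eq hA₀ hrec_b' hrec_κ hn⟩
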